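/- arXiv:2308.06640 — 6 statements merged into one kernel-verified Lean document; each statement's English description precedes it below -/
import Mathlib

section
/- If a category K is movable with respect to a category L and a functor Φ : K ⥤ L, and there exists a functor Ψ : L ⥤ K with Ψ ⋙ Φ equal (or naturally isomorphic) to the identity functor on K (i.e. Φ is a functorial domination), then K is strongly movable. -/
open CategoryTheory

universe v₁ v₂ v₃ u₁ u₂ u₃

def Movable (K : Type u₁) (L : Type u₂) [Category.{v₁} K] [Category.{v₂} L]
    (Φ : K ⥤ L) : Prop :=
  ∀ X : K, ∃ (M : K) (m : M ⟶ X), ∀ (Y : K) (p : Y ⟶ X),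
    ∃ u : Φ.obj M ⟶ Φ.obj Y, u ≫ Φ.map p = Φ.map m

def StronglyMovable (K : Type u₁) [Category.{v₁} K] : Prop :=
  ∀ X : K, ∃ (M : K) (m : M ⟶ X), ∀ (Y : K) (p : Y ⟶ X),
    ∃ u : M ⟶ Y, u ≫ p = m

theorem movable_of_domination_stronglyMovable (K : Type u₁) (L : Type u₂)
    [Category.{v₁} K] [Category.{v₂} L]
    (Φ : K ⥤ L) (h : Movable K L Φ)
    (Ψ : L ⥤ K) (hΨ : Φ ⋙ Ψ = 𝟭 K) :
    StronglyMovable K := by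
  intro X
  obtain ⟨M, m, hm⟩ := h X
  refine ⟨M, m, fun Y p => ?_⟩
  obtain ⟨u, hu⟩ := hm Y p
  refine ⟨eqToHom (Functor.congr_obj hΨ M).symm ≫ Ψ.map u ≫
    eqToHom (Functor.congr_obj hΨ Y), ?_⟩
  have h2 := congrArg Ψ.map hu
  rw [Ψ.map_comp] at h2
  have hp := Functor.congr_hom hΨ p
  have hmm := Functor.congr_hom hΨ m
  simp only [Functor.comp_map, Functor.id_map] at hp hmm
  rw [hp, hmm] at h2
  simp only [Category.assoc] at h2 ⊢
  rw [← Category.assoc (Ψ.map u)] at h2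
  have := congrArg (fun f => eqToHom (Functor.congr_obj hΨ M).symm ≫ f ≫
    eqToHom (Functor.congr_obj hΨ X)) h2
  simpa using this
end

section
/- The product of a family of categories (K_i)_{i ∈ I} is strongly movable if and only if every factor K_i is strongly movable. (For the 'only if' direction, assume each K_i is nonempty, i.e. has at least one object.) -/
open CategoryTheory

universe v₁ v₂ v₃ u₁ u₂ u₃

theorem pi_stronglyMovable_iff (I : Type u₂) (K : I → Type u₁)
    [∀ i, Category.{v₁} (K i)] (hne : ∀ i, Nonempty (K i)) :
    StronglyMovable (∀ i, K i) ↔ ∀ i, StronglyMovable (K i) := by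
  classical
  constructor
  · intro h i X
    set C : ∀ j, K j := fun j => Classical.choice (hne j) with hC
    set Xf : ∀ j, K j := Function.update C i X with hXf
    obtain ⟨Mf, mf, hm⟩ := h Xf
    have hXi : Xf i = X := Function.update_self i X C
    refine ⟨Mf i, mf i ≫ eqToHom hXi, ?_⟩
    intro Y p
    set Yf : ∀ j, K j := Function.update C i Y with hYf
    have hYi : Yf i = Y := Function.update_self i Y C
    obtain ⟨uf, hu⟩ := hm Yf (fun j =>
      if hj : j = i then
        (hj.symm ▸ (eqToHom hYi ≫ p ≫ eqToHom hXi.symm) : Yf j ⟶ Xf j)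
      else
        eqToHom ((Function.update_of_ne hj Y C).trans
          (Function.update_of_ne hj X C).symm))
    refine ⟨uf i ≫ eqToHom hYi, ?_⟩
    have := congrFun hu i
    simp only [CategoryTheory.Pi.comp_apply, eq_self_iff_true, dite_true] at this
    calc (uf i ≫ eqToHom hYi) ≫ p
        = (uf i ≫ eqToHom hYi ≫ p ≫ eqToHom hXi.symm) ≫ eqToHom hXi := by
          simp
      _ = mf i ≫ eqToHom hXi := by rw [← Category.assoc] at this ⊢; rw [this]
  · intro h X
    choose M m hm using fun i => h i (X i)
    refine ⟨M, m, ?_⟩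
    intro Y p
    choose u hu using fun i => hm i (Y i) (p i)
    exact ⟨u, funext hu⟩
end

section
/- The product of two categories K₁ × K₂ is strongly movable if and only if both K₁ and K₂ are strongly movable (assuming both categories are nonempty for the forward direction). -/
open CategoryTheory

universe v₁ v₂ v₃ u₁ u₂ u₃

theorem prod_stronglyMovable_iff (K₁ : Type u₁) (K₂ : Type u₂)
    [Category.{v₁} K₁] [Category.{v₂} K₂]
    (h₁ : Nonempty K₁) (h₂ : Nonempty K₂) :
    StronglyMovable (K₁ × K₂) ↔ StronglyMovable K₁ ∧ StronglyMovable K₂ := by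
  constructor
  · intro h
    constructor
    · intro X₁
      obtain ⟨A⟩ := h₂
      obtain ⟨M, m, hm⟩ := h (X₁, A)
      refine ⟨M.1, m.1, fun Y p => ?_⟩
      obtain ⟨u, hu⟩ := hm (Y, M.2) (p, m.2)
      exact ⟨u.1, congrArg Prod.fst hu⟩
    · intro X₂
      obtain ⟨A⟩ := h₁
      obtain ⟨M, m, hm⟩ := h (A, X₂)
      refine ⟨M.2, m.2, fun Y p => ?_⟩
      obtain ⟨u, hu⟩ := hm (M.1, Y) (m.1, p)
      exact ⟨u.2, congrArg Prod.snd hu⟩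
  · rintro ⟨s₁, s₂⟩ ⟨X₁, X₂⟩
    obtain ⟨M₁, m₁, hm₁⟩ := s₁ X₁
    obtain ⟨M₂, m₂, hm₂⟩ := s₂ X₂
    refine ⟨(M₁, M₂), (m₁, m₂), fun Y p => ?_⟩
    obtain ⟨u₁, hu₁⟩ := hm₁ Y.1 p.1
    obtain ⟨u₂, hu₂⟩ := hm₂ Y.2 p.2
    exact ⟨(u₁, u₂), Prod.ext hu₁ hu₂⟩
end

section
/- If there exist functors F : K ⥤ L and G : L ⥤ K together with a natural transformation φ : G ∘ F ⟶ 1_K (i.e. K is functorially weakly dominated by L), and L is strongly movable, then K is strongly movable. Explicitly, for an object X of K one may take M(X) = G(M(F X)) and m_X = φ_X ∘ G(m_{F X}). -/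
open CategoryTheory

universe v₁ v₂ v₃ u₁ u₂ u₃

theorem stronglyMovable_of_weakDomination (K : Type u₁) (L : Type u₂)
    [Category.{v₁} K] [Category.{v₂} L]
    (F : K ⥤ L) (G : L ⥤ K) (φ : F ⋙ G ⟶ 𝟭 K)
    (hL : StronglyMovable L) : StronglyMovable K := by
  intro X
  obtain ⟨M, m, hM⟩ := hL (F.obj X)
  refine ⟨G.obj M, G.map m ≫ φ.app X, fun Y p => ?_⟩
  obtain ⟨u, hu⟩ := hM (F.obj Y) (F.map p)
  refine ⟨G.map u ≫ φ.app Y, ?_⟩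
  have := φ.naturality p
  simp only [Functor.comp_map, Functor.id_map] at this
  rw [Category.assoc, ← this, ← Category.assoc, ← G.map_comp, hu]
end

section
/- If there exist functors F : K ⥤ L and G : L ⥤ K with F ⋙ G = 1_K (functorial domination K ≤ L), and L is strongly movable, then K is strongly movable. -/
open CategoryTheory

universe v₁ v₂ v₃ u₁ u₂ u₃

theorem stronglyMovable_of_domination (K : Type u₁) (L : Type u₂)
    [Category.{v₁} K] [Category.{v₂} L]
    (F : K ⥤ L) (G : L ⥤ K) (h : F ⋙ G = 𝟭 K)
    (hL : StronglyMovable L) : StronglyMovable K := by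
  intro X
  obtain ⟨M', m', hM'⟩ := hL (F.obj X)
  refine ⟨G.obj M', G.map m' ≫ eqToHom (Functor.congr_obj h X), ?_⟩
  intro Y p
  obtain ⟨u', hu'⟩ := hM' (F.obj Y) (F.map p)
  refine ⟨G.map u' ≫ eqToHom (Functor.congr_obj h Y), ?_⟩
  have hp := Functor.congr_hom h p
  simp only [Functor.comp_map, Functor.id_map] at hp
  rw [← hu', G.map_comp, Category.assoc, Category.assoc, hp]
  simp
end

section
/- If there is an adjunction F ⊣ G with F : K ⥤ L and G : L ⥤ K whose unit 1_K ⟶ F ⋙ G is a natural isomorphism (i.e. F is fully faithful), and L is strongly movable, then K is strongly movable. -/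
open CategoryTheory

universe v₁ v₂ v₃ u₁ u₂ u₃

theorem stronglyMovable_of_adjunction (K : Type u₁) (L : Type u₂)
    [Category.{v₁} K] [Category.{v₂} L]
    (F : K ⥤ L) (G : L ⥤ K) (adj : F ⊣ G) (hunit : IsIso adj.unit)
    (hL : StronglyMovable L) : StronglyMovable K := by
  intro X
  obtain ⟨M, m, hM⟩ := hL (F.obj X)
  refine ⟨G.obj M, G.map m ≫ inv (adj.unit.app X), ?_⟩
  intro Y p
  obtain ⟨u, hu⟩ := hM (F.obj Y) (F.map p)
  refine ⟨G.map u ≫ inv (adj.unit.app Y), ?_⟩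
  have hnat : inv (adj.unit.app Y) ≫ p = (F ⋙ G).map p ≫ inv (adj.unit.app X) := by
    rw [IsIso.inv_comp_eq, ← Category.assoc, ← adj.unit.naturality]
    simp
  rw [Category.assoc, hnat]
  simp only [Functor.comp_map]
  rw [← Category.assoc, ← G.map_comp, hu]
end
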